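/- Let (C, b, 1_C, T) be a standard oriented quantum coalgebra over a field k with C cocommutative. Then b(c, T(d)) = b(c, d) = b(T(c), d) for all c, d ∈ C. -/

import Mathlib

open TensorProduct

noncomputable section

variable {k : Type*} [Field k]

section CoalgebraDefs

variable {C : Type*} [AddCommGroup C] [Module k C]
variable {D : Type*} [AddCommGroup D] [Module k D]

/-- `b'` is a (two-sided convolution) inverse for the bilinear form `b`. -/
def IsInverseForm (ΔC : C →ₗ[k] C ⊗[k] C) (εC : C →ₗ[k] k)
    (ΔD : D →ₗ[k] D ⊗[k] D) (εD : D →ₗ[k] k)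
    (b b' : C →ₗ[k] D →ₗ[k] k) : Prop :=
  ∀ (c : C) (d : D) (n m : ℕ) (c1 c2 : Fin n → C) (d1 d2 : Fin m → D),
    ΔC c = ∑ i, c1 i ⊗ₜ[k] c2 i →
    ΔD d = ∑ j, d1 j ⊗ₜ[k] d2 j →
    (∑ i, ∑ j, b' (c1 i) (d1 j) * b (c2 i) (d2 j) = εC c * εD d) ∧
    (∑ i, ∑ j, b (c1 i) (d1 j) * b' (c2 i) (d2 j) = εC c * εD d)

/-- `T` is a coalgebra automorphism of `C` with respect to the set `𝒮` of bilinear forms. -/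
def IsCoalgAutoWrt (Δ : C →ₗ[k] C ⊗[k] C) (εm : C →ₗ[k] k)
    (𝒮 : Set (C →ₗ[k] C →ₗ[k] k)) (T : C →ₗ[k] C) : Prop :=
  Function.Bijective T ∧ (∀ c, εm (T c) = εm c) ∧
  ∀ β ∈ 𝒮, ∀ β' ∈ 𝒮, ∀ (c d e : C) (n m : ℕ)
    (c1 c2 : Fin n → C) (f1 f2 : Fin m → C),
    Δ c = ∑ i, c1 i ⊗ₜ[k] c2 i →
    Δ (T c) = ∑ j, f1 j ⊗ₜ[k] f2 j →
    (∑ i, β (T (c1 i)) d * β' (T (c2 i)) e = ∑ j, β (f1 j) d * β' (f2 j) e) ∧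
    (∑ i, β d (T (c1 i)) * β' e (T (c2 i)) = ∑ j, β d (f1 j) * β' e (f2 j))

/-- `T` is an ordinary coalgebra automorphism. -/
def IsCoalgAuto (Δ : C →ₗ[k] C ⊗[k] C) (εm : C →ₗ[k] k) (T : C →ₗ[k] C) : Prop :=
  Function.Bijective T ∧ (∀ c, εm (T c) = εm c) ∧
  Δ ∘ₗ T = (TensorProduct.map T T) ∘ₗ Δ

/-- Axiom (qc.1). -/
def QC1 (Δ : C →ₗ[k] C ⊗[k] C) (εm : C →ₗ[k] k)
    (b binv : C →ₗ[k] C →ₗ[k] k) (Td Tu : C →ₗ[k] C) : Prop :=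
  ∀ (c d : C) (n m : ℕ) (c1 c2 : Fin n → C) (d1 d2 : Fin m → C),
    Δ c = ∑ i, c1 i ⊗ₜ[k] c2 i →
    Δ d = ∑ j, d1 j ⊗ₜ[k] d2 j →
    (∑ i, ∑ j, b (c1 i) (Tu (d2 j)) * binv (Td (c2 i)) (d1 j) = εm c * εm d) ∧
    (∑ i, ∑ j, binv (Td (c1 i)) (d2 j) * b (c2 i) (Tu (d1 j)) = εm c * εm d)

/-- Axiom (qc.2). -/
def QC2 (b : C →ₗ[k] C →ₗ[k] k) (Td Tu : C →ₗ[k] C) : Prop :=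
  ∀ c d : C, b (Td c) (Td d) = b c d ∧ b (Tu c) (Tu d) = b c d

/-- Axiom (qc.3), the quantum coalgebra Yang–Baxter relation. -/
def QC3 (Δ : C →ₗ[k] C ⊗[k] C) (b : C →ₗ[k] C →ₗ[k] k) : Prop :=
  ∀ (c d e : C) (n m p : ℕ) (c1 c2 : Fin n → C) (d1 d2 : Fin m → C) (e1 e2 : Fin p → C),
    Δ c = ∑ i, c1 i ⊗ₜ[k] c2 i →
    Δ d = ∑ j, d1 j ⊗ₜ[k] d2 j →
    Δ e = ∑ l, e1 l ⊗ₜ[k] e2 l →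
    ∑ i, ∑ j, ∑ l, b (c1 i) (d1 j) * b (c2 i) (e1 l) * b (d2 j) (e2 l)
      = ∑ i, ∑ j, ∑ l, b (c2 i) (d2 j) * b (c1 i) (e2 l) * b (d1 j) (e1 l)

/-- Oriented quantum coalgebra, with comultiplication `Δ`, counit `εm`, bilinear form `b`
with inverse `binv`, and structure maps `Td`, `Tu`. -/
def IsOrientedQuantumCoalgebra (Δ : C →ₗ[k] C ⊗[k] C) (εm : C →ₗ[k] k)
    (b binv : C →ₗ[k] C →ₗ[k] k) (Td Tu : C →ₗ[k] C) : Prop :=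
  IsInverseForm Δ εm Δ εm b binv ∧
  IsCoalgAutoWrt Δ εm {b, binv} Td ∧
  IsCoalgAutoWrt Δ εm {b, binv} Tu ∧
  Td ∘ₗ Tu = Tu ∘ₗ Td ∧
  QC1 Δ εm b binv Td Tu ∧ QC2 b Td Tu ∧ QC3 Δ b

/-- Strict oriented quantum coalgebra. -/
def IsStrictOrientedQuantumCoalgebra (Δ : C →ₗ[k] C ⊗[k] C) (εm : C →ₗ[k] k)
    (b binv : C →ₗ[k] C →ₗ[k] k) (Td Tu : C →ₗ[k] C) : Prop :=
  IsInverseForm Δ εm Δ εm b binv ∧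
  IsCoalgAuto Δ εm Td ∧ IsCoalgAuto Δ εm Tu ∧
  Td ∘ₗ Tu = Tu ∘ₗ Td ∧
  QC1 Δ εm b binv Td Tu ∧ QC2 b Td Tu ∧ QC3 Δ b

/-- Quantum coalgebra `(C, b, S)`: `S : C → C^cop` is a coalgebra isomorphism with
respect to `b`, `b` is invertible with inverse `b(S(·),·)` (axiom (QC.1)), and
(QC.2), (QC.3) hold. -/
def IsQuantumCoalgebra (Δ : C →ₗ[k] C ⊗[k] C) (εm : C →ₗ[k] k)
    (b : C →ₗ[k] C →ₗ[k] k) (S : C →ₗ[k] C) : Prop :=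
  Function.Bijective S ∧ (∀ c, εm (S c) = εm c) ∧
  (∀ (c d e : C) (n m : ℕ) (c1 c2 : Fin n → C) (f1 f2 : Fin m → C),
    Δ c = ∑ i, c1 i ⊗ₜ[k] c2 i →
    Δ (S c) = ∑ j, f1 j ⊗ₜ[k] f2 j →
    (∑ i, b (S (c1 i)) d * b (S (c2 i)) e = ∑ j, b (f2 j) d * b (f1 j) e) ∧
    (∑ i, b d (S (c1 i)) * b e (S (c2 i)) = ∑ j, b d (f2 j) * b e (f1 j))) ∧
  IsInverseForm Δ εm Δ εm b (b ∘ₗ S) ∧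
  (∀ c d, b (S c) (S d) = b c d) ∧
  QC3 Δ b

/-- Strict quantum coalgebra `(C, b, S)`: `S : C → C^cop` is an ordinary coalgebra
isomorphism and (QC.1)–(QC.3) hold. -/
def IsStrictQuantumCoalgebra (Δ : C →ₗ[k] C ⊗[k] C) (εm : C →ₗ[k] k)
    (b : C →ₗ[k] C →ₗ[k] k) (S : C →ₗ[k] C) : Prop :=
  Function.Bijective S ∧ (∀ c, εm (S c) = εm c) ∧
  (∀ c, (TensorProduct.comm k C C) (Δ (S c)) = TensorProduct.map S S (Δ c)) ∧
  IsInverseForm Δ εm Δ εm b (b ∘ₗ S) ∧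
  (∀ c d, b (S c) (S d) = b c d) ∧
  QC3 Δ b

end CoalgebraDefs

section AlgebraDefs

variable {A : Type*} [Ring A] [Algebra k A]

def rho12 (ρ : A ⊗[k] A) : (A ⊗[k] A) ⊗[k] A := ρ ⊗ₜ[k] (1 : A)

def rho13 (ρ : A ⊗[k] A) : (A ⊗[k] A) ⊗[k] A :=
  TensorProduct.map ((TensorProduct.mk k A A).flip 1) LinearMap.id ρ

def rho23 (ρ : A ⊗[k] A) : (A ⊗[k] A) ⊗[k] A :=
  TensorProduct.map (TensorProduct.mk k A A 1) LinearMap.id ρ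

/-- The quantum Yang–Baxter equation for `ρ ∈ A ⊗ A`. -/
def QYBE (ρ : A ⊗[k] A) : Prop :=
  rho12 ρ * rho13 ρ * rho23 ρ = rho23 ρ * rho13 ρ * rho12 ρ

/-- Quantum algebra `(A, ρ, s)`. -/
def IsQuantumAlgebra (ρ : A ⊗[k] A) (s : A →ₗ[k] A) : Prop :=
  Function.Bijective s ∧ s 1 = 1 ∧ (∀ a b : A, s (a * b) = s b * s a) ∧
  ρ * TensorProduct.map s LinearMap.id ρ = 1 ∧
  TensorProduct.map s LinearMap.id ρ * ρ = 1 ∧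
  TensorProduct.map s s ρ = ρ ∧
  QYBE ρ

def opL (k A : Type*) [Field k] [Ring A] [Algebra k A] : A →ₗ[k] Aᵐᵒᵖ :=
  (MulOpposite.opLinearEquiv k).toLinearMap

/-- Oriented quantum algebra `(A, ρ, t_d, t_u)`. -/
def IsOrientedQuantumAlgebra (ρ : A ⊗[k] A) (td tu : A →ₗ[k] A) : Prop :=
  Function.Bijective td ∧ td 1 = 1 ∧ (∀ a b : A, td (a * b) = td a * td b) ∧
  Function.Bijective tu ∧ tu 1 = 1 ∧ (∀ a b : A, tu (a * b) = tu a * tu b) ∧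
  td ∘ₗ tu = tu ∘ₗ td ∧
  ∃ ρinv : A ⊗[k] A, ρ * ρinv = 1 ∧ ρinv * ρ = 1 ∧
    TensorProduct.map td (opL k A) ρinv * TensorProduct.map LinearMap.id (opL k A ∘ₗ tu) ρ = 1 ∧
    TensorProduct.map LinearMap.id (opL k A ∘ₗ tu) ρ * TensorProduct.map td (opL k A) ρinv = 1 ∧
    TensorProduct.map td td ρ = ρ ∧ TensorProduct.map tu tu ρ = ρ ∧
    QYBE ρ

/-- The comultiplication of the dual coalgebra of a finite-dimensional algebra. -/
def dualComul (k A : Type*) [Field k] [Ring A] [Algebra k A] [FiniteDimensional k A] :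
    Module.Dual k A →ₗ[k] Module.Dual k A ⊗[k] Module.Dual k A :=
  (TensorProduct.dualDistribEquiv k A A).symm.toLinearMap ∘ₗ (LinearMap.mul' k A).dualMap

/-- The counit of the dual coalgebra: evaluation at `1`. -/
def dualCounit (k A : Type*) [Field k] [Ring A] [Algebra k A] : Module.Dual k A →ₗ[k] k :=
  Module.Dual.eval k A 1

/-- The bilinear form `b_ρ` on the dual: `b_ρ(f, g) = (f ⊗ g)(ρ)`. -/
def dualForm {A : Type*} [Ring A] [Algebra k A] (ρ : A ⊗[k] A) :
    Module.Dual k A →ₗ[k] Module.Dual k A →ₗ[k] k :=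
  TensorProduct.curry ((Module.Dual.eval k (A ⊗[k] A) ρ) ∘ₗ TensorProduct.dualDistrib k A A)

/-- The embedding `A → A ⊕ A^op` onto the first summand. -/
def inlA (k A : Type*) [Field k] [Ring A] [Algebra k A] : A →ₗ[k] A × Aᵐᵒᵖ :=
  LinearMap.inl k A Aᵐᵒᵖ

/-- The embedding `a ↦ ā` of `A` onto the second summand `A^op` of `A ⊕ A^op`. -/
def inrA (k A : Type*) [Field k] [Ring A] [Algebra k A] : A →ₗ[k] A × Aᵐᵒᵖ :=
  LinearMap.inr k A Aᵐᵒᵖ ∘ₗ opL k A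

/-- The element `𝝆` of the doubling construction. -/
def doubleRho (ρ ρinv : A ⊗[k] A) (td' tu' : A →ₗ[k] A) :
    (A × Aᵐᵒᵖ) ⊗[k] (A × Aᵐᵒᵖ) :=
  TensorProduct.map (inlA k A) (inlA k A) ρ + TensorProduct.map (inrA k A) (inrA k A) ρ
    + TensorProduct.map (inrA k A) (inlA k A) ρinv
    + TensorProduct.map (inlA k A) (inrA k A ∘ₗ td' ∘ₗ tu') ρinv

/-- The map `𝐬(a ⊕ b) = b ⊕ t_d⁻¹∘t_u⁻¹(a)` of the doubling construction,
where `td'`, `tu'` are the inverses of `t_d`, `t_u`. -/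
def doubleS {A : Type*} [Ring A] [Algebra k A] (td' tu' : A →ₗ[k] A) :
    A × Aᵐᵒᵖ →ₗ[k] A × Aᵐᵒᵖ :=
  LinearMap.prod ((MulOpposite.opLinearEquiv k).symm.toLinearMap ∘ₗ LinearMap.snd k A Aᵐᵒᵖ)
    ((MulOpposite.opLinearEquiv k).toLinearMap ∘ₗ td' ∘ₗ tu' ∘ₗ LinearMap.fst k A Aᵐᵒᵖ)

/-- The diagonal extension `t ⊕ t` of an automorphism `t` of `A` to `A ⊕ A^op`. -/
def doubleT {A : Type*} [Ring A] [Algebra k A] (t : A →ₗ[k] A) :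
    A × Aᵐᵒᵖ →ₗ[k] A × Aᵐᵒᵖ :=
  LinearMap.prodMap t ((MulOpposite.opLinearEquiv k).toLinearMap ∘ₗ t ∘ₗ
    (MulOpposite.opLinearEquiv k).symm.toLinearMap)

end AlgebraDefs

end

/-! A bilinear form on `C` is a linear functional on the coalgebra `C ⊗ C`, and both the
invertibility of `b` and (qc.1) are identities in the convolution algebra of such functionals.
For `T_d = id` and `C` cocommutative, (qc.1) says that `b(·, T ·)` is a right convolution inverse
of `b⁻¹`, which also has `b` as a left inverse; hence `b(·, T ·) = b`. The second identity follows
from `b(T c, d) = b(T c, T d) = b(c, d)`, by (qc.2). -/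

open WithConv

section BilinearConvolution

variable {R C M N : Type*} [CommSemiring R]

theorem TensorProduct.exists_fin_sum_tmul [AddCommMonoid M] [Module R M] [AddCommMonoid N]
    [Module R N] (x : M ⊗[R] N) :
    ∃ (n : ℕ) (a : Fin n → M) (b : Fin n → N), x = ∑ i, a i ⊗ₜ[R] b i := by
  obtain ⟨S, rfl⟩ := TensorProduct.exists_finset x
  refine ⟨S.card, fun i => (S.equivFin.symm i).1.1, fun i => (S.equivFin.symm i).1.2, ?_⟩
  rw [← Finset.sum_coe_sort]
  exact (Fintype.sum_equiv S.equivFin.symm _ _ fun _ => rfl).symm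

variable [AddCommMonoid C] [Module R C] [Coalgebra R C]

theorem convMul_lift_tmul (β γ : C →ₗ[R] C →ₗ[R] R) {c d : C} {n m : ℕ}
    {c1 c2 : Fin n → C} {d1 d2 : Fin m → C}
    (hc : Coalgebra.comul (R := R) c = ∑ i, c1 i ⊗ₜ[R] c2 i)
    (hd : Coalgebra.comul (R := R) d = ∑ j, d1 j ⊗ₜ[R] d2 j) :
    (toConv (lift β) * toConv (lift γ)) (c ⊗ₜ[R] d)
      = ∑ i, ∑ j, β (c1 i) (d1 j) * γ (c2 i) (d2 j) := by
  simp only [LinearMap.convMul_apply, comul_tmul, hc, hd, tmul_sum, sum_tmul, map_sum,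
    AlgebraTensorModule.tensorTensorTensorComm_tmul, map_tmul, lift.tmul, LinearMap.mul'_apply]
  exact Finset.sum_comm

theorem convMul_lift_eq_one {β γ : C →ₗ[R] C →ₗ[R] R}
    (h : ∀ (c d : C) (n m : ℕ) (c1 c2 : Fin n → C) (d1 d2 : Fin m → C),
      Coalgebra.comul (R := R) c = ∑ i, c1 i ⊗ₜ[R] c2 i →
      Coalgebra.comul (R := R) d = ∑ j, d1 j ⊗ₜ[R] d2 j →
      ∑ i, ∑ j, β (c1 i) (d1 j) * γ (c2 i) (d2 j)
        = Coalgebra.counit (R := R) c * Coalgebra.counit (R := R) d) :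
    toConv (lift β) * toConv (lift γ) = 1 := by
  ext c d
  obtain ⟨n, c1, c2, hc⟩ := TensorProduct.exists_fin_sum_tmul (Coalgebra.comul (R := R) c)
  obtain ⟨m, d1, d2, hd⟩ := TensorProduct.exists_fin_sum_tmul (Coalgebra.comul (R := R) d)
  simp [convMul_lift_tmul β γ hc hd, h c d n m c1 c2 d1 d2 hc hd, mul_comm]

end BilinearConvolution

/-- For a standard oriented quantum coalgebra `(C, b, 1_C, T)` with `C` cocommutative,
`b(c, T(d)) = b(c, d) = b(T(c), d)` for all `c, d`. -/
theorem standard_oqc_cocommutative {k C : Type*} [Field k] [AddCommGroup C] [Module k C]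
    [Coalgebra k C] (b binv : C →ₗ[k] C →ₗ[k] k) (T : C →ₗ[k] C)
    (h : IsOrientedQuantumCoalgebra (Coalgebra.comul (R := k)) (Coalgebra.counit (R := k))
      b binv LinearMap.id T)
    (hcoc : ∀ c : C, (TensorProduct.comm k C C) (Coalgebra.comul (R := k) c)
      = Coalgebra.comul (R := k) c) :
    ∀ c d : C, b c (T d) = b c d ∧ b (T c) d = b c d := by
  obtain ⟨hinv, -, -, -, hqc1, hqc2, -⟩ := h
  have comul_swap {d : C} {m : ℕ} {d1 d2 : Fin m → C}
      (hd : Coalgebra.comul (R := k) d = ∑ j, d1 j ⊗ₜ[k] d2 j) :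
      Coalgebra.comul (R := k) d = ∑ j, d2 j ⊗ₜ[k] d1 j := by
    rw [← hcoc d, hd]
    simp
  have binv_mul_b : toConv (lift binv) * toConv (lift b) = 1 :=
    convMul_lift_eq_one fun c d n m c1 c2 d1 d2 hc hd => (hinv c d n m c1 c2 d1 d2 hc hd).1
  have bT_mul_binv : toConv (lift (b.compl₂ T)) * toConv (lift binv) = 1 :=
    convMul_lift_eq_one fun c d n m c1 c2 d1 d2 hc hd =>
      (hqc1 c d n m c1 c2 d2 d1 hc (comul_swap hd)).1
  have hbT (c d : C) : b c (T d) = b c d := by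
    simpa using congr($(left_inv_eq_right_inv bT_mul_binv binv_mul_b) (c ⊗ₜ[k] d))
  refine fun c d => ⟨hbT c d, ?_⟩
  rw [← hbT (T c) d]
  exact (hqc2 c d).2
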